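/- For every positive even integer n, the function f has a critical point c_n in the open interval (n - 1/(π²n), n), i.e., there exists c with n - 1/(π²n) < c < n and f'(c) = 0. -/

import Mathlib

/-!
At an even integer `n` the derivative `f'` equals `1/2`. Just to the left of `n`, at
`n - t/π` with `t = 1/(πn)`, the term `π (x/2 + 1/4) sin(πx)` is about `-(1/2 + πt/4)`, which
outweighs `1 - cos(πx)/2 ≈ 1/2 + t²/4`; so `f'` changes sign on `(n - 1/(π²n), n)` and the
intermediate value theorem gives the critical point.
-/

open Real

noncomputable def f (x : ℝ) : ℝ := x + 1/4 - (x/2 + 1/4) * Real.cos (Real.pi * x)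

lemma hasDerivAt_f (x : ℝ) :
    HasDerivAt f (1 - cos (π * x) / 2 + π * (x / 2 + 1 / 4) * sin (π * x)) x := by
  have hcos : HasDerivAt (fun x => cos (π * x)) (-sin (π * x) * π) x := by
    simpa using ((hasDerivAt_id x).const_mul π).cos
  have hlin : HasDerivAt (fun x : ℝ => x / 2 + 1 / 4) (1 / 2) x :=
    ((hasDerivAt_id' x).div_const 2).add_const _
  have h : HasDerivAt f (1 - (1 / 2 * cos (π * x) + (x / 2 + 1 / 4) * (-sin (π * x) * π))) x :=
    ((hasDerivAt_id' x).add_const _).sub (hlin.mul hcos)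
  exact h.congr_deriv (by ring)

lemma continuous_deriv_f : Continuous (deriv f) := by
  rw [funext fun x => (hasDerivAt_f x).deriv]
  fun_prop

lemma deriv_f_even_sub {n : ℤ} (hn : Even n) (s : ℝ) :
    deriv f (n - s) = 1 - cos (π * s) / 2 - π * ((n - s) / 2 + 1 / 4) * sin (π * s) := by
  have hangle : π * (n - s) = n * π - π * s := by ring
  rw [(hasDerivAt_f _).deriv, hangle, cos_int_mul_pi_sub, sin_int_mul_pi_sub, hn.neg_one_zpow]
  ring

lemma deriv_f_even {n : ℤ} (hn : Even n) : deriv f n = 1 / 2 := by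
  convert deriv_f_even_sub hn 0 using 1 <;> norm_num

lemma one_sub_half_cos_lt {t : ℝ} (ht : 0 < t) (ht' : t ≤ 1 / 2) :
    1 - cos t / 2 < (1 / (2 * t) - t / 2 + π / 4) * sin t := by
  have hcos := one_sub_sq_div_two_le_cos (x := t)
  have hsin := sin_gt_sub_cube ht
  have hcoef : 0 < 1 / (2 * t) - t / 2 + π / 4 := by
    have : 1 ≤ 1 / (2 * t) := by rw [le_div_iff₀ (by positivity)]; linarith
    linarith [pi_pos]
  have hpoly : 1 / 2 + t ^ 2 / 4 < (1 / (2 * t) - t / 2 + π / 4) * (t - t ^ 3 / 6) := by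
    have hexp : (1 / (2 * t) - t / 2 + π / 4) * (t - t ^ 3 / 6)
        = (1 - t ^ 2 + π * t / 2) * (1 - t ^ 2 / 6) / 2 := by
      field_simp; ring
    have hpi : 0 ≤ (π - 3) * (t * (6 - t ^ 2)) := by
      have := pi_gt_three
      apply mul_nonneg <;> nlinarith
    have hquad : 0 < t * (3 / 2 - t ^ 2 / 4 - 5 * t / 3) := mul_pos ht (by nlinarith)
    -- with `π > 3` the difference is at least `t (3/2 - t²/4 - 5t/3) / 2 + t⁴/12`
    rw [hexp]
    nlinarith [pow_pos ht 4]
  linarith [mul_lt_mul_of_pos_left hsin hcoef]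

lemma deriv_f_even_sub_neg {n : ℤ} (hn : Even n) (hpos : 0 < n) :
    deriv f (n - 1 / (π ^ 2 * n)) < 0 := by
  have hN : (1 : ℝ) ≤ n := by exact_mod_cast hpos
  set t := 1 / (π * n) with ht
  have ht0 : 0 < t := by positivity
  have ht2 : t ≤ 1 / 2 := by
    rw [ht, div_le_div_iff₀ (by positivity) two_pos]
    nlinarith [pi_gt_three]
  have hangle : π * (1 / (π ^ 2 * n)) = t := by rw [ht]; field_simp
  have hcoef : π * ((n - 1 / (π ^ 2 * n)) / 2 + 1 / 4) = 1 / (2 * t) - t / 2 + π / 4 := by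
    rw [ht]; field_simp
  rw [deriv_f_even_sub hn, hangle, hcoef]
  linarith [one_sub_half_cos_lt ht0 ht2]

theorem stmt_3 (n : ℕ) (hn : 0 < n) (he : Even n) :
    ∃ c : ℝ, (n : ℝ) - 1 / (Real.pi ^ 2 * n) < c ∧ c < (n : ℝ) ∧ deriv f c = 0 := by
  have hneg := deriv_f_even_sub_neg (n := n) (by exact_mod_cast he) (by exact_mod_cast hn)
  have hpos := deriv_f_even (n := n) (by exact_mod_cast he)
  push_cast at hneg hpos
  have hle : (n : ℝ) - 1 / (π ^ 2 * n) ≤ n := sub_le_self _ (by positivity)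
  obtain ⟨c, hc, hc0⟩ :=
    intermediate_value_Ioo hle continuous_deriv_f.continuousOn ⟨hneg, by rw [hpos]; norm_num⟩
  exact ⟨c, hc.1, hc.2, hc0⟩
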